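/- (Theorem 2.1, part 3) Let the sequences {x_k^t}, {x_0^t}, {y_k^t} be generated by the flexible ADMM (Algorithm 2) for the consensus problem under the period-T essentially cyclic rule, suppose Assumptions A1, A2, A3 hold, and assume additionally that X is compact. Let Z* denote the set of stationary tuples ({x̂_k}, x̂_0, ŷ) for the reformulated consensus problem, i.e. those satisfying ∇g_k(x̂_k) + ŷ_k = 0 for all k, x̂_0 minimizes x ↦ h(x) + Σ_k ⟨ŷ_k, x̂_k − x⟩ over X, and x̂_k = x̂_0 for all k. Then Z* is nonempty, the sequence ({x_k^t}, x_0^t, y^t) is bounded, and lim_{t→∞} dist(({x_k^t}, x_0^t, y^t), Z*) = 0, where dist(z, Z*) := inf_{ẑ ∈ Z*} ‖z − ẑ‖. -/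

import Mathlib

/-!
The augmented Lagrangian, evaluated along the iterates, is a Lyapunov function. The `x₀`-step
and the `x_k`-steps decrease it by `(∑ ρ_k)/2 ‖Δx₀‖²` and `γ_k/2 ‖Δx_k‖²` (strong convexity of
the subproblems), while the dual step increases it by at most `L_k²/ρ_k ‖Δx_k‖²`, because the
first-order condition of the `x_k`-subproblem makes `y_k = -∇g_k(x_k)` after every update.
Assumption A2 makes the net decrease positive, and since `ρ_k ≥ L_k` the descent lemma bounds the
Lagrangian below by `f(x₀) ≥ f̄`. Hence successive differences of the iterates vanish. Every block
is updated within each window of `T` iterations and right after an update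
`x_k - x₀ = Δy_k / ρ_k`, so the consensus residual vanishes as well. Compactness of `X` bounds the
iterates, and passing to the limit in the optimality conditions of the updates shows that every
cluster point lies in `Z*`, which forces `dist(·, Z*) → 0`.
-/

open Filter
open scoped RealInnerProductSpace BigOperators

/-- Augmented Lagrangian for the reformulated consensus problem. -/
noncomputable def augL {N K : ℕ} (g : Fin K → EuclideanSpace ℝ (Fin N) → ℝ)
    (h : EuclideanSpace ℝ (Fin N) → ℝ) (ρ : Fin K → ℝ)
    (xk : Fin K → EuclideanSpace ℝ (Fin N)) (x0 : EuclideanSpace ℝ (Fin N))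
    (y : Fin K → EuclideanSpace ℝ (Fin N)) : ℝ :=
  (∑ k, g k (xk k)) + h x0 + (∑ k, ⟪y k, xk k - x0⟫)
    + ∑ k, ρ k / 2 * ‖xk k - x0‖ ^ 2

open Topology Set Metric Bornology

abbrev ConsensusState (N K : ℕ) : Type :=
  (Fin K → EuclideanSpace ℝ (Fin N)) × EuclideanSpace ℝ (Fin N) × (Fin K → EuclideanSpace ℝ (Fin N))

theorem le_of_forall_mem_Ioo_le_add_mul {a b c : ℝ} (h : ∀ θ ∈ Ioo (0 : ℝ) 1, a ≤ b + θ * c) :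
    a ≤ b := by
  have hlim : Tendsto (fun θ : ℝ => b + θ * c) (𝓝[>] 0) (𝓝 b) := by
    have : Continuous fun θ : ℝ => b + θ * c := by fun_prop
    simpa using this.continuousWithinAt.tendsto (x := 0) (s := Ioi 0)
  exact ge_of_tendsto hlim (eventually_of_mem (Ioo_mem_nhdsGT one_pos) h)

theorem tendsto_zero_of_succ_add_le {V D : ℕ → ℝ} (hV : ∀ t, V (t + 1) + D t ≤ V t)
    (hD : ∀ t, 0 ≤ D t) (hb : BddBelow (range V)) : Tendsto D atTop (𝓝 0) := by
  have hanti : Antitone V := antitone_nat_of_succ_le fun t => by linarith [hV t, hD t]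
  have hlim := tendsto_atTop_ciInf hanti hb
  have hgap : Tendsto (fun t => V t - V (t + 1)) atTop (𝓝 0) := by
    simpa using hlim.sub (hlim.comp (tendsto_add_atTop_nat 1))
  exact squeeze_zero hD (fun t => by linarith [hV t]) hgap

theorem tendsto_zero_of_mul_sq_norm_le {E : Type*} [SeminormedAddCommGroup E] {u : ℕ → E}
    {D : ℕ → ℝ} {c : ℝ} (hc : 0 < c) (hu : ∀ t, c * ‖u t‖ ^ 2 ≤ D t)
    (hD : Tendsto D atTop (𝓝 0)) : Tendsto u atTop (𝓝 0) := by
  rw [tendsto_zero_iff_norm_tendsto_zero]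
  have hsqrt : Tendsto (fun t => √(D t / c)) atTop (𝓝 0) := by
    simpa using (hD.div_const c).sqrt
  refine squeeze_zero (fun t => norm_nonneg _) (fun t => ?_) hsqrt
  have hDt : 0 ≤ D t := (mul_nonneg hc.le (sq_nonneg _)).trans (hu t)
  rw [Real.le_sqrt (norm_nonneg _) (div_nonneg hDt hc.le), le_div_iff₀ hc, mul_comm]
  exact hu t

theorem tendsto_comp_sub_of_tendsto_succ_sub {E : Type*} [SeminormedAddCommGroup E]
    {f : ℕ → E} (hf : Tendsto (fun t => f (t + 1) - f t) atTop (𝓝 0)) {s : ℕ → ℕ} {T : ℕ}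
    (hs : ∀ t, t ≤ s t ∧ s t ≤ t + T) : Tendsto (fun t => f (s t) - f t) atTop (𝓝 0) := by
  rw [tendsto_zero_iff_norm_tendsto_zero]
  have hbound : ∀ t, ‖f (s t) - f t‖ ≤ ∑ l ∈ Finset.range T, ‖f (t + l + 1) - f (t + l)‖ := by
    intro t
    calc ‖f (s t) - f t‖ = dist (f t) (f (s t)) := by rw [dist_eq_norm']
      _ ≤ ∑ i ∈ Finset.Ico t (s t), dist (f i) (f (i + 1)) := dist_le_Ico_sum_dist f (hs t).1
      _ ≤ ∑ i ∈ Finset.Ico t (t + T), dist (f i) (f (i + 1)) :=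
        Finset.sum_le_sum_of_subset_of_nonneg (Finset.Ico_subset_Ico_right (hs t).2)
          fun _ _ _ => dist_nonneg
      _ = ∑ l ∈ Finset.range T, ‖f (t + l + 1) - f (t + l)‖ := by
        rw [Finset.sum_Ico_eq_sum_range, add_tsub_cancel_left]
        simp only [dist_eq_norm']
  have hterms : Tendsto (fun t => ∑ l ∈ Finset.range T, ‖f (t + l + 1) - f (t + l)‖)
      atTop (𝓝 0) := by
    simpa using tendsto_finsetSum (Finset.range T) fun l _ =>
      (tendsto_zero_iff_norm_tendsto_zero.1 hf).comp (tendsto_add_atTop_nat l)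
  exact squeeze_zero (fun t => norm_nonneg _) hbound hterms

theorem MapClusterPt.of_tendsto_sub {α E : Type*} [SeminormedAddCommGroup E] {F : Filter α}
    {u v : α → E} {a : E} (ha : MapClusterPt a F u) (huv : Tendsto (v - u) F (𝓝 0)) :
    MapClusterPt a F v := by
  rw [Metric.nhds_basis_ball.mapClusterPt_iff_frequently] at ha ⊢
  intro ε hε
  have hnear := (tendsto_zero_iff_norm_tendsto_zero.1 huv).eventually (gt_mem_nhds (half_pos hε))
  refine ((ha _ (half_pos hε)).and_eventually hnear).mono fun i ⟨hu, hv⟩ => ?_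
  rw [mem_ball, dist_eq_norm] at hu ⊢
  have : v i - a = (v - u) i + (u i - a) := by simp
  rw [this]
  linarith [norm_add_le ((v - u) i) (u i - a)]

theorem eventually_atTop_of_forall_add_one {P : ℕ → Prop} (h : ∀ n, P (n + 1)) :
    ∀ᶠ t in atTop, P t := by
  rw [← map_add_atTop_eq_nat 1, eventually_map]
  exact Eventually.of_forall h

theorem isBounded_range_of_eventually_mem {α : Type*} [PseudoMetricSpace α] {u : ℕ → α}
    {s : Set α} (hs : IsBounded s) (h : ∀ᶠ t in atTop, u t ∈ s) : IsBounded (range u) := by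
  obtain ⟨n, hn⟩ := eventually_atTop.1 h
  refine (((finite_Iio n).image u).isBounded.union hs).subset ?_
  rintro _ ⟨t, rfl⟩
  rcases lt_or_ge t n with ht | ht
  · exact Or.inl ⟨t, ht, rfl⟩
  · exact Or.inr (hn t ht)

theorem tendsto_infDist_of_forall_mapClusterPt_mem {α : Type*} [PseudoMetricSpace α]
    [ProperSpace α] {u : ℕ → α} {S : Set α} (hu : IsBounded (range u))
    (hS : ∀ a, MapClusterPt a atTop u → a ∈ S) :
    S.Nonempty ∧ Tendsto (fun t => infDist (u t) S) atTop (𝓝 0) := by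
  have hK := hu.isCompact_closure
  have hmem : ∀ t, u t ∈ closure (range u) := fun t => subset_closure (mem_range_self t)
  obtain ⟨a, -, ha⟩ := hK.exists_mapClusterPt (f := atTop) (u := u)
    (tendsto_principal.2 (Eventually.of_forall hmem))
  have hne : S.Nonempty := ⟨a, hS a ha⟩
  refine ⟨hne, ?_⟩
  have hnhds := hK.tendsto_nhdsSet_of_mapClusterPt (Eventually.of_forall hmem)
    fun a _ ha => hS a ha
  rw [Metric.tendsto_nhds]
  intro ε hε
  filter_upwards [hnhds (thickening_mem_nhdsSet S hε)] with t ht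
  rw [Real.dist_0_eq_abs, abs_of_nonneg infDist_nonneg]
  exact (mem_thickening_iff_infDist_lt hne).1 ht

theorem exists_update_times {β : Type*} {C : ℕ → Finset β} {T : ℕ}
    (hcyc : ∀ t j, ∃ i, 1 ≤ i ∧ i ≤ T ∧ j ∈ C (t + i)) (j : β) :
    ∃ s : ℕ → ℕ, ∀ t, t ≤ s t ∧ s t + 1 ≤ t + T ∧ j ∈ C (s t + 1) := by
  choose i hi using fun t => hcyc t j
  refine ⟨fun t => t + i t - 1, fun t => ?_⟩
  obtain ⟨hi1, hiT, hiC⟩ := hi t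
  dsimp only
  refine ⟨by omega, by omega, ?_⟩
  rwa [show t + i t - 1 + 1 = t + i t by omega]

section InnerProductSpace

variable {E : Type*} [NormedAddCommGroup E] [InnerProductSpace ℝ E]

theorem ConvexOn.add_inner_add_const {s : Set E} {f : E → ℝ} (hf : ConvexOn ℝ s f) (v : E)
    (c : ℝ) : ConvexOn ℝ s fun w => f w + (⟪v, w⟫ + c) :=
  hf.add (((innerₛₗ ℝ v).convexOn hf.1).add_const c)

theorem StrongConvexOn.add_sq_norm_sub_le_of_isMinOn {s : Set E} {f : E → ℝ} {m : ℝ}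
    (hf : StrongConvexOn s m f) {a z : E} (ha : a ∈ s) (hz : z ∈ s) (hmin : IsMinOn f s a) :
    f a + m / 2 * ‖z - a‖ ^ 2 ≤ f z := by
  refine le_of_forall_mem_Ioo_le_add_mul (c := m / 2 * ‖z - a‖ ^ 2) fun θ hθ => ?_
  have hθ' : 0 ≤ 1 - θ := by linarith [hθ.2]
  have hmem : θ • z + (1 - θ) • a ∈ s := hf.1 hz ha hθ.1.le hθ' (add_sub_cancel θ 1)
  have hconv := hf.2 hz ha hθ.1.le hθ' (add_sub_cancel θ 1)
  have hle := isMinOn_iff.1 hmin _ hmem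
  simp only [smul_eq_mul] at hconv
  nlinarith [hθ.1]

theorem ConvexOn.isMinOn_of_le_add_sq_norm_sub {s : Set E} {f : E → ℝ} (hf : ConvexOn ℝ s f)
    {a : E} (ha : a ∈ s) {c : ℝ} (h : ∀ w ∈ s, f a ≤ f w + c * ‖w - a‖ ^ 2) :
    IsMinOn f s a := by
  refine isMinOn_iff.2 fun w hw =>
    le_of_forall_mem_Ioo_le_add_mul (c := c * ‖w - a‖ ^ 2) fun θ hθ => ?_
  have hθ' : 0 ≤ 1 - θ := by linarith [hθ.2]
  have hmem : θ • w + (1 - θ) • a ∈ s := hf.1 hw ha hθ.1.le hθ' (add_sub_cancel θ 1)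
  have hconv := hf.2 hw ha hθ.1.le hθ' (add_sub_cancel θ 1)
  have hstep : θ • w + (1 - θ) • a - a = θ • (w - a) := by
    rw [sub_smul, one_smul, smul_sub]; abel
  have hnear := h _ hmem
  rw [hstep, norm_smul, Real.norm_of_nonneg hθ.1.le, mul_pow] at hnear
  simp only [smul_eq_mul] at hconv
  nlinarith [hθ.1, sq_nonneg ‖w - a‖]

theorem le_add_inner_add_sq_of_lipschitz_gradient [CompleteSpace E] {g : E → ℝ} {g' : E → E} {L : ℝ}
    (hg : ∀ z, HasGradientAt g (g' z) z) (hL : ∀ u v, ‖g' u - g' v‖ ≤ L * ‖u - v‖) (u v : E) :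
    g v ≤ g u + ⟪g' u, v - u⟫ + L / 2 * ‖v - u‖ ^ 2 := by
  set d := v - u
  let φ : ℝ → ℝ := fun s => g (u + s • d) - s * ⟪g' u, d⟫ - L / 2 * s ^ 2 * ‖d‖ ^ 2
  have hφ : ∀ s, HasDerivAt φ (⟪g' (u + s • d), d⟫ - ⟪g' u, d⟫ - L * s * ‖d‖ ^ 2) s := by
    intro s
    have hline : HasDerivAt (fun r : ℝ => u + r • d) d s := by
      simpa using ((hasDerivAt_id s).smul_const d).const_add u
    have hgs := (hg (u + s • d)).hasFDerivAt.comp_hasDerivAt s hline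
    simp only [InnerProductSpace.toDual_apply_apply] at hgs
    have h := (hgs.sub ((hasDerivAt_id s).mul_const ⟪g' u, d⟫)).sub
      (((hasDerivAt_pow 2 s).const_mul (L / 2)).mul_const (‖d‖ ^ 2))
    exact h.congr_deriv (by push_cast; ring)
  have hslope : ∀ s ∈ interior (Ici (0 : ℝ)),
      ⟪g' (u + s • d), d⟫ - ⟪g' u, d⟫ - L * s * ‖d‖ ^ 2 ≤ 0 := by
    intro s hs
    rw [interior_Ici] at hs
    have hlip : ‖g' (u + s • d) - g' u‖ ≤ L * (s * ‖d‖) := by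
      simpa [norm_smul, Real.norm_of_nonneg hs.out.le] using hL (u + s • d) u
    have := real_inner_le_norm (g' (u + s • d) - g' u) d
    rw [inner_sub_left] at this
    nlinarith [norm_nonneg d]
  have hanti : AntitoneOn φ (Ici 0) :=
    antitoneOn_of_hasDerivWithinAt_nonpos (convex_Ici 0)
      (fun s _ => (hφ s).continuousAt.continuousWithinAt)
      (fun s _ => (hφ s).hasDerivWithinAt) hslope
  have h01 := hanti (mem_Ici.2 le_rfl) (by norm_num : (1 : ℝ) ∈ Ici 0) zero_le_one
  simp only [φ, zero_smul, add_zero, one_smul, zero_mul, sub_zero] at h01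
  have : u + d = v := by simp [d]
  rw [this] at h01
  nlinarith [h01]

noncomputable def blockAugL (g : E → ℝ) (ρ : ℝ) (y b w : E) : ℝ :=
  g w + ⟪y, w - b⟫ + ρ / 2 * ‖w - b‖ ^ 2

theorem hasGradientAt_blockAugL [CompleteSpace E] {g : E → ℝ} {g'z z : E}
    (hg : HasGradientAt g g'z z) (ρ : ℝ) (y b : E) :
    HasGradientAt (blockAugL g ρ y b) (g'z + y + ρ • (z - b)) z := by
  rw [hasGradientAt_iff_hasFDerivAt]
  have hsub : HasFDerivAt (fun w : E => w - b) (ContinuousLinearMap.id ℝ E) z :=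
    (hasFDerivAt_id z).sub_const b
  have h := (hg.hasFDerivAt.add ((hasFDerivAt_const y z).inner ℝ hsub)).add
    (hsub.norm_sq.const_mul (ρ / 2))
  refine h.congr_fderiv ?_
  ext w
  simp only [map_sub, ContinuousLinearMap.comp_id, add_apply, InnerProductSpace.toDual_apply_apply,
    ContinuousLinearMap.comp_apply, ContinuousLinearMap.prod_apply, zero_apply,
    ContinuousLinearMap.id_apply, fderivInnerCLM_apply, inner_zero_left, add_zero, smul_apply,
    sub_apply, coe_innerSL_apply, nsmul_eq_mul, Nat.cast_ofNat, smul_eq_mul, map_add, map_smul,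
    add_right_inj]
  ring

theorem eq_neg_grad_of_isMinOn_blockAugL [CompleteSpace E] {g : E → ℝ} {g' : E → E}
    (hg : ∀ z, HasGradientAt g (g' z) z) {ρ : ℝ} {y b a : E}
    (hmin : IsMinOn (blockAugL g ρ y b) univ a) : y + ρ • (a - b) = -g' a := by
  have h := (hmin.isLocalMin univ_mem).hasFDerivAt_eq_zero
    (hasGradientAt_blockAugL (hg a) ρ y b).hasFDerivAt
  rw [← map_zero (InnerProductSpace.toDual ℝ E),
    (InnerProductSpace.toDual ℝ E).injective.eq_iff] at h
  rw [eq_neg_iff_add_eq_zero, add_comm, ← add_assoc, h]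

theorem StrongConvexOn.blockAugL {g : E → ℝ} {ρ γ : ℝ}
    (hg : StrongConvexOn univ γ fun w => g w + ρ / 2 * ‖w‖ ^ 2) (y b : E) :
    StrongConvexOn univ γ (blockAugL g ρ y b) := by
  rw [strongConvexOn_iff_convex] at hg ⊢
  convert hg.add_inner_add_const (y - ρ • b) (ρ / 2 * ‖b‖ ^ 2 - ⟪y, b⟫) using 2 with w
  simp only [_root_.blockAugL, norm_sub_sq_real, inner_sub_left, inner_sub_right,
    real_inner_smul_left, real_inner_comm b w]
  ring

theorem le_blockAugL_neg_grad [CompleteSpace E] {g : E → ℝ} {g' : E → E} {L ρ : ℝ}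
    (hg : ∀ z, HasGradientAt g (g' z) z) (hL : ∀ u v, ‖g' u - g' v‖ ≤ L * ‖u - v‖)
    (hLρ : L ≤ ρ) (a b : E) : g b ≤ blockAugL g ρ (-g' a) b a := by
  have hdesc := le_add_inner_add_sq_of_lipschitz_gradient hg hL a b
  have hinner : ⟪-g' a, a - b⟫ = ⟪g' a, b - a⟫ := by rw [inner_neg_left, ← inner_neg_right, neg_sub]
  have hsq : L / 2 * ‖b - a‖ ^ 2 ≤ ρ / 2 * ‖a - b‖ ^ 2 := by
    rw [norm_sub_rev]; gcongr
  unfold blockAugL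
  linarith

def stationarySet {K : ℕ} (g' : Fin K → E → E) (h : E → ℝ) (X : Set E) :
    Set ((Fin K → E) × E × (Fin K → E)) :=
  {z | (∀ k : Fin K, g' k (z.1 k) + z.2.2 k = 0) ∧
       (z.2.1 ∈ X ∧ ∀ w ∈ X,
         h z.2.1 + ∑ k, ⟪z.2.2 k, z.1 k - z.2.1⟫ ≤ h w + ∑ k, ⟪z.2.2 k, z.1 k - w⟫) ∧
       (∀ k : Fin K, z.1 k = z.2.1)}

end InnerProductSpace

section AugmentedLagrangian

variable {N K : ℕ} (g : Fin K → EuclideanSpace ℝ (Fin N) → ℝ) (h : EuclideanSpace ℝ (Fin N) → ℝ)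
  (ρ : Fin K → ℝ)

theorem augL_eq_add_sum_blockAugL (xk : Fin K → EuclideanSpace ℝ (Fin N))
    (x0 : EuclideanSpace ℝ (Fin N)) (y : Fin K → EuclideanSpace ℝ (Fin N)) :
    augL g h ρ xk x0 y = h x0 + ∑ k, blockAugL (g k) (ρ k) (y k) x0 (xk k) := by
  simp only [augL, blockAugL, Finset.sum_add_distrib]
  ring

theorem augL_sub_sq_norm (xk : Fin K → EuclideanSpace ℝ (Fin N))
    (y : Fin K → EuclideanSpace ℝ (Fin N)) (w : EuclideanSpace ℝ (Fin N)) :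
    augL g h ρ xk w y - (∑ k, ρ k) / 2 * ‖w‖ ^ 2 =
      h w + (⟪-∑ k, (y k + ρ k • xk k), w⟫ +
        ∑ k, (g k (xk k) + ⟪y k, xk k⟫ + ρ k / 2 * ‖xk k‖ ^ 2)) := by
  have hblock : ∀ k, ⟪y k, xk k - w⟫ + ρ k / 2 * ‖xk k - w‖ ^ 2 - ρ k / 2 * ‖w‖ ^ 2 =
      ⟪y k, xk k⟫ + ρ k / 2 * ‖xk k‖ ^ 2 - ⟪y k + ρ k • xk k, w⟫ := fun k => by
    rw [norm_sub_sq_real, inner_sub_right, inner_add_left, real_inner_smul_left]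
    ring
  have hsplit : augL g h ρ xk w y - (∑ k, ρ k) / 2 * ‖w‖ ^ 2 = ∑ k, g k (xk k) + h w +
      ∑ k, (⟪y k, xk k - w⟫ + ρ k / 2 * ‖xk k - w‖ ^ 2 - ρ k / 2 * ‖w‖ ^ 2) := by
    simp only [augL, Finset.sum_div, Finset.sum_mul, Finset.sum_add_distrib,
      Finset.sum_sub_distrib]
    ring
  rw [hsplit, Finset.sum_congr rfl fun k _ => hblock k]
  rw [inner_neg_left, sum_inner]
  simp only [Finset.sum_add_distrib, Finset.sum_sub_distrib]
  ring

theorem strongConvexOn_augL_x0 {s : Set (EuclideanSpace ℝ (Fin N))} (hh : ConvexOn ℝ univ h)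
    (hs : Convex ℝ s) (xk y : Fin K → EuclideanSpace ℝ (Fin N)) :
    StrongConvexOn s (∑ k, ρ k) fun w => augL g h ρ xk w y := by
  rw [strongConvexOn_iff_convex]
  simp_rw [augL_sub_sq_norm]
  exact (hh.subset (subset_univ s) hs).add_inner_add_const _ _

theorem augL_eq_augL_add_sum_inner (xk : Fin K → EuclideanSpace ℝ (Fin N))
    (x0 : EuclideanSpace ℝ (Fin N)) (y y' : Fin K → EuclideanSpace ℝ (Fin N)) :
    augL g h ρ xk x0 y' = augL g h ρ xk x0 y + ∑ k, ⟪y' k - y k, xk k - x0⟫ := by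
  simp only [augL, inner_sub_left, Finset.sum_sub_distrib]
  ring

theorem augL_of_forall_eq {xk : Fin K → EuclideanSpace ℝ (Fin N)} {c : EuclideanSpace ℝ (Fin N)}
    (hxk : ∀ k, xk k = c) (y : Fin K → EuclideanSpace ℝ (Fin N)) (w : EuclideanSpace ℝ (Fin N)) :
    augL g h ρ xk w y =
      ∑ k, g k (xk k) + (h w + ∑ k, ⟪y k, xk k - w⟫) + (∑ k, ρ k) / 2 * ‖c - w‖ ^ 2 := by
  simp only [augL, hxk, Finset.sum_div, Finset.sum_mul]
  ring

theorem continuous_augL (hg : ∀ k, Continuous (g k)) (hh : Continuous h) :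
    Continuous fun p : ConsensusState N K => augL g h ρ p.1 p.2.1 p.2.2 := by
  unfold augL
  fun_prop

variable {g h ρ} {g' : Fin K → EuclideanSpace ℝ (Fin N) → EuclideanSpace ℝ (Fin N)}

theorem sum_add_le_augL {Lg : Fin K → ℝ} (hgrad : ∀ k z, HasGradientAt (g k) (g' k z) z)
    (hLip : ∀ k u v, ‖g' k u - g' k v‖ ≤ Lg k * ‖u - v‖) (hLρ : ∀ k, Lg k ≤ ρ k)
    {xk y : Fin K → EuclideanSpace ℝ (Fin N)} (hy : ∀ k, y k = -g' k (xk k))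
    (x0 : EuclideanSpace ℝ (Fin N)) : ∑ k, g k x0 + h x0 ≤ augL g h ρ xk x0 y := by
  rw [augL_eq_add_sum_blockAugL, add_comm (∑ k, g k x0)]
  gcongr with k
  rw [hy k]
  exact le_blockAugL_neg_grad (hgrad k) (hLip k) (hLρ k) _ _

theorem mem_stationarySet_of_isMinOn {X : Set (EuclideanSpace ℝ (Fin N))} (hh : ConvexOn ℝ univ h)
    (hXcv : Convex ℝ X) {xk y : Fin K → EuclideanSpace ℝ (Fin N)} {x0 : EuclideanSpace ℝ (Fin N)}
    (hgrad : ∀ k, g' k (xk k) + y k = 0) (hx0 : x0 ∈ X) (hcons : ∀ k, xk k = x0)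
    (hmin : IsMinOn (fun w => augL g h ρ xk w y) X x0) : (xk, x0, y) ∈ stationarySet g' h X := by
  refine ⟨hgrad, ⟨hx0, ?_⟩, hcons⟩
  have hconv : ConvexOn ℝ X fun w => h w + ∑ k, ⟪y k, xk k - w⟫ := by
    have heq : (fun w => h w + ∑ k, ⟪y k, xk k - w⟫) =
        fun w => h w + (⟪-∑ k, y k, w⟫ + ∑ k, ⟪y k, xk k⟫) := by
      ext w
      simp only [inner_sub_right, Finset.sum_sub_distrib, inner_neg_left, sum_inner]
      ring
    rw [heq]
    exact (hh.subset (subset_univ X) hXcv).add_inner_add_const _ _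
  refine isMinOn_iff.1 (hconv.isMinOn_of_le_add_sq_norm_sub hx0 (c := (∑ k, ρ k) / 2)
    fun w hw => ?_)
  have := isMinOn_iff.1 hmin w hw
  rw [augL_of_forall_eq g h ρ hcons, augL_of_forall_eq g h ρ hcons, sub_self, norm_zero,
    norm_sub_rev] at this
  linarith [this]

end AugmentedLagrangian

theorem isBounded_range_of_tendsto_sub {N K : ℕ} {X : Set (EuclideanSpace ℝ (Fin N))}
    {g' : Fin K → EuclideanSpace ℝ (Fin N) → EuclideanSpace ℝ (Fin N)}
    {x : ℕ → Fin K → EuclideanSpace ℝ (Fin N)} {x0 : ℕ → EuclideanSpace ℝ (Fin N)}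
    {y : ℕ → Fin K → EuclideanSpace ℝ (Fin N)} (hX : IsCompact X)
    (hg' : ∀ k, Continuous (g' k)) (hx0 : ∀ t, x0 (t + 1) ∈ X)
    (hy : ∀ t k, y (t + 1) k = -g' k (x (t + 1) k))
    (hres : ∀ k, Tendsto (fun t => x t k - x0 t) atTop (𝓝 0)) :
    IsBounded (range fun t => (x t, x0 t, y t)) := by
  let Φ : EuclideanSpace ℝ (Fin N) × (Fin K → EuclideanSpace ℝ (Fin N)) → ConsensusState N K :=
    fun p => (fun k => p.1 + p.2 k, p.1, fun k => -g' k (p.1 + p.2 k))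
  have hΦ : Continuous Φ := by fun_prop
  refine isBounded_range_of_eventually_mem
    ((hX.prod (isCompact_closedBall 0 1)).image hΦ).isBounded ?_
  have hsmall : ∀ᶠ t in atTop, (fun k => x t k - x0 t) ∈ closedBall 0 1 :=
    (tendsto_pi_nhds.2 hres).eventually (closedBall_mem_nhds 0 one_pos)
  rw [← map_add_atTop_eq_nat 1, eventually_map]
  filter_upwards [(tendsto_add_atTop_nat 1).eventually hsmall] with t ht
  refine ⟨(x0 (t + 1), fun k => x (t + 1) k - x0 (t + 1)), ⟨hx0 t, ht⟩, ?_⟩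
  simp only [Φ, add_sub_cancel, ← hy]

/-- The iterates of Algorithm 2. Block `none` is `x₀` and block `some k` is `x_k`;
`C (t + 1)` is the set of blocks updated at iteration `t + 1`. -/
structure IsFlexibleADMM {N K : ℕ} (g : Fin K → EuclideanSpace ℝ (Fin N) → ℝ)
    (h : EuclideanSpace ℝ (Fin N) → ℝ) (X : Set (EuclideanSpace ℝ (Fin N))) (ρ : Fin K → ℝ)
    (x : ℕ → Fin K → EuclideanSpace ℝ (Fin N)) (x0 : ℕ → EuclideanSpace ℝ (Fin N))
    (y : ℕ → Fin K → EuclideanSpace ℝ (Fin N)) (C : ℕ → Finset (Option (Fin K))) : Prop where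
  first_update_all : C 1 = Finset.univ
  x0_mem : ∀ t, none ∈ C (t + 1) → x0 (t + 1) ∈ X
  x0_isMinOn : ∀ t, none ∈ C (t + 1) →
    IsMinOn (fun w => augL g h ρ (x t) w (y t)) X (x0 (t + 1))
  x0_stay : ∀ t, none ∉ C (t + 1) → x0 (t + 1) = x0 t
  x_isMinOn : ∀ t k, some k ∈ C (t + 1) →
    IsMinOn (blockAugL (g k) (ρ k) (y t k) (x0 (t + 1))) univ (x (t + 1) k)
  x_stay : ∀ t k, some k ∉ C (t + 1) → x (t + 1) k = x t k
  y_update : ∀ t k, some k ∈ C (t + 1) → y (t + 1) k = y t k + ρ k • (x (t + 1) k - x0 (t + 1))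
  y_stay : ∀ t k, some k ∉ C (t + 1) → y (t + 1) k = y t k

namespace IsFlexibleADMM

variable {N K : ℕ} {g : Fin K → EuclideanSpace ℝ (Fin N) → ℝ}
  {g' : Fin K → EuclideanSpace ℝ (Fin N) → EuclideanSpace ℝ (Fin N)}
  {h : EuclideanSpace ℝ (Fin N) → ℝ} {X : Set (EuclideanSpace ℝ (Fin N))} {ρ Lg γ : Fin K → ℝ}
  {x : ℕ → Fin K → EuclideanSpace ℝ (Fin N)} {x0 : ℕ → EuclideanSpace ℝ (Fin N)}
  {y : ℕ → Fin K → EuclideanSpace ℝ (Fin N)} {C : ℕ → Finset (Option (Fin K))}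

theorem y_succ_eq_neg_grad (hA : IsFlexibleADMM g h X ρ x x0 y C)
    (hgrad : ∀ k z, HasGradientAt (g k) (g' k z) z) (t : ℕ) (k : Fin K) :
    y (t + 1) k = -g' k (x (t + 1) k) := by
  have hupdate : ∀ t, some k ∈ C (t + 1) → y (t + 1) k = -g' k (x (t + 1) k) := fun t hk => by
    rw [hA.y_update t k hk]
    exact eq_neg_grad_of_isMinOn_blockAugL (hgrad k) (hA.x_isMinOn t k hk)
  induction t with
  | zero => exact hupdate 0 (by simp [hA.first_update_all])
  | succ t ih =>
    by_cases hk : some k ∈ C (t + 1 + 1)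
    · exact hupdate (t + 1) hk
    · rw [hA.y_stay _ k hk, hA.x_stay _ k hk, ih]

theorem x0_succ_mem (hA : IsFlexibleADMM g h X ρ x x0 y C) (t : ℕ) : x0 (t + 1) ∈ X := by
  induction t with
  | zero => exact hA.x0_mem 0 (by simp [hA.first_update_all])
  | succ t ih =>
    by_cases h0 : none ∈ C (t + 1 + 1)
    · exact hA.x0_mem _ h0
    · rwa [hA.x0_stay _ h0]

theorem augL_x0_step_add_le (hA : IsFlexibleADMM g h X ρ x x0 y C) (hh : ConvexOn ℝ univ h)
    (hXcv : Convex ℝ X) {t : ℕ} (hx0 : x0 t ∈ X) :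
    augL g h ρ (x t) (x0 (t + 1)) (y t) + (∑ k, ρ k) / 2 * ‖x0 (t + 1) - x0 t‖ ^ 2 ≤
      augL g h ρ (x t) (x0 t) (y t) := by
  by_cases h0 : none ∈ C (t + 1)
  · rw [norm_sub_rev]
    exact (strongConvexOn_augL_x0 g h ρ hh hXcv (x t) (y t)).add_sq_norm_sub_le_of_isMinOn
      (hA.x0_mem t h0) hx0 (hA.x0_isMinOn t h0)
  · simp [hA.x0_stay t h0]

theorem augL_x_step_add_le (hA : IsFlexibleADMM g h X ρ x x0 y C)
    (hstrong : ∀ k, StrongConvexOn univ (γ k) fun z => g k z + ρ k / 2 * ‖z‖ ^ 2) (t : ℕ) :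
    augL g h ρ (x (t + 1)) (x0 (t + 1)) (y t) + ∑ k, γ k / 2 * ‖x (t + 1) k - x t k‖ ^ 2 ≤
      augL g h ρ (x t) (x0 (t + 1)) (y t) := by
  have hblock : ∀ k, blockAugL (g k) (ρ k) (y t k) (x0 (t + 1)) (x (t + 1) k) +
      γ k / 2 * ‖x (t + 1) k - x t k‖ ^ 2 ≤ blockAugL (g k) (ρ k) (y t k) (x0 (t + 1)) (x t k) := by
    intro k
    by_cases hk : some k ∈ C (t + 1)
    · rw [norm_sub_rev]
      exact ((hstrong k).blockAugL _ _).add_sq_norm_sub_le_of_isMinOn (mem_univ _) (mem_univ _)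
        (hA.x_isMinOn t k hk)
    · simp [hA.x_stay t k hk]
  rw [augL_eq_add_sum_blockAugL, augL_eq_add_sum_blockAugL]
  have := Finset.sum_le_sum fun k (_ : k ∈ Finset.univ) => hblock k
  rw [Finset.sum_add_distrib] at this
  linarith

theorem augL_y_step_le (hA : IsFlexibleADMM g h X ρ x x0 y C)
    (hgrad : ∀ k z, HasGradientAt (g k) (g' k z) z)
    (hLip : ∀ k u v, ‖g' k u - g' k v‖ ≤ Lg k * ‖u - v‖) (hρ : ∀ k, 0 < ρ k) {t : ℕ}
    (hy : ∀ k, y t k = -g' k (x t k)) :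
    augL g h ρ (x (t + 1)) (x0 (t + 1)) (y (t + 1)) ≤
      augL g h ρ (x (t + 1)) (x0 (t + 1)) (y t) +
        ∑ k, Lg k ^ 2 / ρ k * ‖x (t + 1) k - x t k‖ ^ 2 := by
  have hblock : ∀ k, ⟪y (t + 1) k - y t k, x (t + 1) k - x0 (t + 1)⟫ ≤
      Lg k ^ 2 / ρ k * ‖x (t + 1) k - x t k‖ ^ 2 := by
    intro k
    by_cases hk : some k ∈ C (t + 1)
    · have hΔy : ‖y (t + 1) k - y t k‖ ≤ Lg k * ‖x (t + 1) k - x t k‖ := by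
        rw [hA.y_succ_eq_neg_grad hgrad, hy, neg_sub_neg, norm_sub_rev]
        exact hLip k _ _
      have hres : x (t + 1) k - x0 (t + 1) = (ρ k)⁻¹ • (y (t + 1) k - y t k) := by
        rw [hA.y_update t k hk, add_sub_cancel_left, smul_smul, inv_mul_cancel₀ (hρ k).ne',
          one_smul]
      rw [hres, real_inner_smul_right, real_inner_self_eq_norm_sq, div_mul_eq_mul_div,
        inv_mul_eq_div, div_le_div_iff_of_pos_right (hρ k), ← mul_pow]
      exact pow_le_pow_left₀ (norm_nonneg _) hΔy 2
    · rw [hA.y_stay t k hk, sub_self, inner_zero_left]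
      exact mul_nonneg (div_nonneg (sq_nonneg _) (hρ k).le) (sq_nonneg _)
  rw [augL_eq_augL_add_sum_inner g h ρ _ _ (y t)]
  gcongr with k
  exact hblock k

theorem augL_succ_add_le (hA : IsFlexibleADMM g h X ρ x x0 y C)
    (hgrad : ∀ k z, HasGradientAt (g k) (g' k z) z)
    (hLip : ∀ k u v, ‖g' k u - g' k v‖ ≤ Lg k * ‖u - v‖) (hρ : ∀ k, 0 < ρ k)
    (hstrong : ∀ k, StrongConvexOn univ (γ k) fun z => g k z + ρ k / 2 * ‖z‖ ^ 2)
    (hh : ConvexOn ℝ univ h) (hXcv : Convex ℝ X) {t : ℕ} (hx0 : x0 t ∈ X)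
    (hy : ∀ k, y t k = -g' k (x t k)) :
    augL g h ρ (x (t + 1)) (x0 (t + 1)) (y (t + 1)) +
        (∑ k, (γ k / 2 - Lg k ^ 2 / ρ k) * ‖x (t + 1) k - x t k‖ ^ 2 +
          (∑ k, ρ k) / 2 * ‖x0 (t + 1) - x0 t‖ ^ 2) ≤
      augL g h ρ (x t) (x0 t) (y t) := by
  have hx0_step := hA.augL_x0_step_add_le hh hXcv hx0
  have hx_step := hA.augL_x_step_add_le hstrong t
  have hy_step := hA.augL_y_step_le hgrad hLip hρ hy
  simp only [sub_mul, Finset.sum_sub_distrib]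
  linarith

theorem tendsto_x_x0_succ_sub (hA : IsFlexibleADMM g h X ρ x x0 y C) (hK : 1 ≤ K)
    (hgrad : ∀ k z, HasGradientAt (g k) (g' k z) z)
    (hLip : ∀ k u v, ‖g' k u - g' k v‖ ≤ Lg k * ‖u - v‖) (hρ : ∀ k, 0 < ρ k)
    (hstrong : ∀ k, StrongConvexOn univ (γ k) fun z => g k z + ρ k / 2 * ‖z‖ ^ 2)
    (hA2 : ∀ k, 2 * Lg k ^ 2 < ρ k * γ k) (hLρ : ∀ k, Lg k ≤ ρ k) (hh : ConvexOn ℝ univ h)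
    (hXcv : Convex ℝ X) (hbdd : BddBelow ((fun z => (∑ k, g k z) + h z) '' X)) :
    Tendsto (fun t => x (t + 1) - x t) atTop (𝓝 0) ∧
      Tendsto (fun t => x0 (t + 1) - x0 t) atTop (𝓝 0) := by
  set σ := ∑ k, ρ k
  set c : Fin K → ℝ := fun k => γ k / 2 - Lg k ^ 2 / ρ k
  have hσ : 0 < σ := Finset.sum_pos (fun k _ => hρ k) ⟨⟨0, hK⟩, Finset.mem_univ _⟩
  have hc : ∀ k, 0 < c k := fun k => by
    have : Lg k ^ 2 / ρ k < γ k / 2 := by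
      rw [div_lt_div_iff₀ (hρ k) two_pos]
      linarith [hA2 k]
    simp only [c]
    linarith
  set D : ℕ → ℝ := fun t => ∑ k, c k * ‖x (t + 1 + 1) k - x (t + 1) k‖ ^ 2 +
    σ / 2 * ‖x0 (t + 1 + 1) - x0 (t + 1)‖ ^ 2
  have hxterm : ∀ t k, 0 ≤ c k * ‖x (t + 1 + 1) k - x (t + 1) k‖ ^ 2 := fun t k => by
    have := hc k
    positivity
  have hx0term : ∀ t, 0 ≤ σ / 2 * ‖x0 (t + 1 + 1) - x0 (t + 1)‖ ^ 2 := fun t => by positivity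
  set V : ℕ → ℝ := fun t => augL g h ρ (x (t + 1)) (x0 (t + 1)) (y (t + 1))
  have hdecrease : ∀ t, V (t + 1) + D t ≤ V t := fun t =>
    hA.augL_succ_add_le hgrad hLip hρ hstrong hh hXcv (hA.x0_succ_mem t)
      (hA.y_succ_eq_neg_grad hgrad t)
  have hbelow : BddBelow (range V) := by
    obtain ⟨m, hm⟩ := hbdd
    refine ⟨m, ?_⟩
    rintro _ ⟨t, rfl⟩
    exact (hm ⟨_, hA.x0_succ_mem t, rfl⟩).trans
      (sum_add_le_augL hgrad hLip hLρ (hA.y_succ_eq_neg_grad hgrad t) _)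
  have hD : Tendsto D atTop (𝓝 0) := tendsto_zero_of_succ_add_le hdecrease
    (fun t => add_nonneg (Finset.sum_nonneg fun k _ => hxterm t k) (hx0term t)) hbelow
  constructor
  · refine (tendsto_add_atTop_iff_nat 1).1 (tendsto_pi_nhds.2 fun k => ?_)
    refine tendsto_zero_of_mul_sq_norm_le (hc k) (fun t => ?_) hD
    exact (Finset.single_le_sum (fun j _ => hxterm t j) (Finset.mem_univ k)).trans
      (le_add_of_nonneg_right (hx0term t))
  · refine (tendsto_add_atTop_iff_nat 1).1 (tendsto_zero_of_mul_sq_norm_le (half_pos hσ)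
      (fun t => ?_) hD)
    exact le_add_of_nonneg_left (Finset.sum_nonneg fun k _ => hxterm t k)

theorem tendsto_y_succ_sub (hA : IsFlexibleADMM g h X ρ x x0 y C)
    (hgrad : ∀ k z, HasGradientAt (g k) (g' k z) z)
    (hLip : ∀ k u v, ‖g' k u - g' k v‖ ≤ Lg k * ‖u - v‖)
    (hx : Tendsto (fun t => x (t + 1) - x t) atTop (𝓝 0)) :
    Tendsto (fun t => y (t + 1) - y t) atTop (𝓝 0) := by
  refine (tendsto_add_atTop_iff_nat 1).1 (tendsto_pi_nhds.2 fun k => ?_)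
  have hxk : Tendsto (fun t => x (t + 1 + 1) k - x (t + 1) k) atTop (𝓝 0) :=
    tendsto_pi_nhds.1 ((tendsto_add_atTop_iff_nat 1).2 hx) k
  simp only [Pi.sub_apply, Pi.zero_apply, hA.y_succ_eq_neg_grad hgrad, neg_sub_neg]
  rw [tendsto_zero_iff_norm_tendsto_zero]
  refine squeeze_zero (fun t => norm_nonneg _) (fun t => ?_)
    (by simpa using hxk.norm.const_mul (Lg k))
  rw [norm_sub_rev]
  exact hLip k _ _

theorem tendsto_x_sub_x0 (hA : IsFlexibleADMM g h X ρ x x0 y C) (hρ : ∀ k, 0 < ρ k) {T : ℕ}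
    (hcyc : ∀ t j, ∃ i, 1 ≤ i ∧ i ≤ T ∧ j ∈ C (t + i))
    (hx : Tendsto (fun t => x (t + 1) - x t) atTop (𝓝 0))
    (hx0 : Tendsto (fun t => x0 (t + 1) - x0 t) atTop (𝓝 0))
    (hy : Tendsto (fun t => y (t + 1) - y t) atTop (𝓝 0)) (k : Fin K) :
    Tendsto (fun t => x t k - x0 t) atTop (𝓝 0) := by
  obtain ⟨s, hs⟩ := exists_update_times hcyc (some k)
  have hxk : Tendsto (fun t => x (t + 1) k - x t k) atTop (𝓝 0) := tendsto_pi_nhds.1 hx k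
  have hstep : Tendsto (fun t => (x (t + 1) k - x0 (t + 1)) - (x t k - x0 t)) atTop (𝓝 0) := by
    have hdiff := hxk.sub hx0
    rw [sub_zero] at hdiff
    exact hdiff.congr fun t => by abel
  have hgap := tendsto_comp_sub_of_tendsto_succ_sub (f := fun t => x t k - x0 t) hstep
    (s := fun t => s t + 1) (T := T)
    fun t => ⟨(hs t).1.trans (Nat.le_succ _), (hs t).2.1⟩
  have hupdated : Tendsto (fun t => x (s t + 1) k - x0 (s t + 1)) atTop (𝓝 0) := by
    have hys : Tendsto (fun t => y (s t + 1) k - y (s t) k) atTop (𝓝 0) :=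
      (tendsto_pi_nhds.1 hy k).comp (tendsto_atTop_mono (fun t => (hs t).1) tendsto_id)
    convert hys.const_smul (ρ k)⁻¹ using 2 with t
    · rw [hA.y_update _ k (hs t).2.2, add_sub_cancel_left, smul_smul,
        inv_mul_cancel₀ (hρ k).ne', one_smul]
    · rw [smul_zero]
  simpa using hupdated.sub hgap

theorem mapClusterPt_isMinOn (hA : IsFlexibleADMM g h X ρ x x0 y C)
    (hgrad : ∀ k z, HasGradientAt (g k) (g' k z) z) (hh : ConvexOn ℝ univ h) {T : ℕ}
    (hcyc : ∀ t j, ∃ i, 1 ≤ i ∧ i ≤ T ∧ j ∈ C (t + i))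
    (hx : Tendsto (fun t => x (t + 1) - x t) atTop (𝓝 0))
    (hx0 : Tendsto (fun t => x0 (t + 1) - x0 t) atTop (𝓝 0))
    (hy : Tendsto (fun t => y (t + 1) - y t) atTop (𝓝 0))
    {a : ConsensusState N K}
    (ha : MapClusterPt a atTop fun t => (x t, x0 t, y t)) :
    IsMinOn (fun w => augL g h ρ a.1 w a.2.2) X a.2.1 := by
  obtain ⟨s, hs⟩ := exists_update_times hcyc none
  have hgc : ∀ k, Continuous (g k) := fun k =>
    continuous_iff_continuousAt.2 fun z => (hgrad k z).continuousAt
  have hL := continuous_augL g h ρ hgc (continuousOn_univ.1 (hh.continuousOn isOpen_univ))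
  have hclosed : IsClosed {p : ConsensusState N K |
      ∀ w ∈ X, augL g h ρ p.1 p.2.1 p.2.2 ≤ augL g h ρ p.1 w p.2.2} := by
    simp only [ofPred_forall]
    exact isClosed_iInter fun w => isClosed_iInter fun _ =>
      isClosed_le hL (hL.comp (by fun_prop : Continuous fun p : ConsensusState N K =>
        ((p.1, w, p.2.2) : ConsensusState N K)))
  have hnear : Tendsto ((fun t => (x (s t), x0 (s t + 1), y (s t))) - fun t => (x t, x0 t, y t))
      atTop (𝓝 0) := by
    have hsT : ∀ t, t ≤ s t ∧ s t ≤ t + T := fun t => ⟨(hs t).1, Nat.le_of_succ_le (hs t).2.1⟩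
    have hsT' : ∀ t, t ≤ s t + 1 ∧ s t + 1 ≤ t + T := fun t =>
      ⟨(hs t).1.trans (Nat.le_succ _), (hs t).2.1⟩
    refine (Prod.tendsto_iff _ _).2 ⟨tendsto_comp_sub_of_tendsto_succ_sub hx hsT,
      (Prod.tendsto_iff _ _).2 ⟨tendsto_comp_sub_of_tendsto_succ_sub hx0 hsT',
        tendsto_comp_sub_of_tendsto_succ_sub hy hsT⟩⟩
  refine isMinOn_iff.2 (hclosed.mem_of_mapClusterPt (ha.of_tendsto_sub hnear)
    (Eventually.of_forall fun t => ?_))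
  exact isMinOn_iff.1 (hA.x0_isMinOn (s t) (hs t).2.2)

theorem mem_stationarySet_of_mapClusterPt (hA : IsFlexibleADMM g h X ρ x x0 y C)
    (hgrad : ∀ k z, HasGradientAt (g k) (g' k z) z) (hg' : ∀ k, Continuous (g' k))
    (hh : ConvexOn ℝ univ h) (hXcl : IsClosed X) (hXcv : Convex ℝ X) {T : ℕ}
    (hcyc : ∀ t j, ∃ i, 1 ≤ i ∧ i ≤ T ∧ j ∈ C (t + i))
    (hx : Tendsto (fun t => x (t + 1) - x t) atTop (𝓝 0))
    (hx0 : Tendsto (fun t => x0 (t + 1) - x0 t) atTop (𝓝 0))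
    (hy : Tendsto (fun t => y (t + 1) - y t) atTop (𝓝 0))
    (hres : ∀ k, Tendsto (fun t => x t k - x0 t) atTop (𝓝 0))
    {a : ConsensusState N K}
    (ha : MapClusterPt a atTop fun t => (x t, x0 t, y t)) : a ∈ stationarySet g' h X := by
  obtain ⟨xk, x0', y'⟩ := a
  refine mem_stationarySet_of_isMinOn hh hXcv ?_ ?_ ?_
    (hA.mapClusterPt_isMinOn hgrad hh hcyc hx hx0 hy ha)
  · have hclosed : IsClosed {p : ConsensusState N K | ∀ k, g' k (p.1 k) + p.2.2 k = 0} := by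
      simp only [ofPred_forall]
      exact isClosed_iInter fun k => isClosed_eq (by fun_prop) continuous_const
    refine hclosed.mem_of_mapClusterPt ha (eventually_atTop_of_forall_add_one fun n k => ?_)
    simp [hA.y_succ_eq_neg_grad hgrad n k]
  · have hclosed : IsClosed {p : ConsensusState N K | p.2.1 ∈ X} := hXcl.preimage (by fun_prop)
    exact hclosed.mem_of_mapClusterPt ha (eventually_atTop_of_forall_add_one hA.x0_succ_mem)
  · have hclosed : IsClosed {p : ConsensusState N K | ∀ k, p.1 k = p.2.1} := by
      simp only [ofPred_forall]
      exact isClosed_iInter fun k => isClosed_eq (by fun_prop) (by fun_prop)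
    have hnear : Tendsto ((fun t => (fun _ : Fin K => x0 t, x0 t, y t)) -
        fun t => (x t, x0 t, y t)) atTop (𝓝 0) := by
      refine (Prod.tendsto_iff _ _).2 ⟨tendsto_pi_nhds.2 fun k => ?_, by simp⟩
      simpa using (hres k).neg
    exact hclosed.mem_of_mapClusterPt (ha.of_tendsto_sub hnear)
      (Eventually.of_forall fun t k => rfl)

end IsFlexibleADMM

theorem theorem2_1_part3_general
    {N K : ℕ} (hK : 1 ≤ K)
    (g : Fin K → EuclideanSpace ℝ (Fin N) → ℝ)
    (g' : Fin K → EuclideanSpace ℝ (Fin N) → EuclideanSpace ℝ (Fin N))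
    (h : EuclideanSpace ℝ (Fin N) → ℝ)
    (X : Set (EuclideanSpace ℝ (Fin N)))
    (Lg ρ γ : Fin K → ℝ)
    (x : ℕ → Fin K → EuclideanSpace ℝ (Fin N))
    (x0 : ℕ → EuclideanSpace ℝ (Fin N))
    (y : ℕ → Fin K → EuclideanSpace ℝ (Fin N))
    (C : ℕ → Finset (Option (Fin K)))
    -- Assumption A1
    (hgrad : ∀ k z, HasGradientAt (g k) (g' k z) z)
    (hLip : ∀ k u v, ‖g' k u - g' k v‖ ≤ Lg k * ‖u - v‖)
    (hconv : ConvexOn ℝ Set.univ h)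
    (hXcl : IsClosed X) (hXcv : Convex ℝ X)
    (hρ : ∀ k, 0 < ρ k)
    -- Assumption A2
    (hstrong : ∀ k, StrongConvexOn Set.univ (γ k)
      (fun z : EuclideanSpace ℝ (Fin N) => g k z + ρ k / 2 * ‖z‖ ^ 2))
    (hA2b : ∀ k, 2 * Lg k ^ 2 < ρ k * γ k)
    (hA2c : ∀ k, Lg k ≤ ρ k)
    -- Assumption A3 : `f` is bounded below over `X`
    (hbdd : BddBelow ((fun z => (∑ k, g k z) + h z) '' X))
    -- Algorithm 2
    (hC1 : C 1 = Finset.univ)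
    (hx0upd : ∀ t : ℕ,
      (none ∈ C (t + 1) → x0 (t + 1) ∈ X ∧ ∀ z ∈ X,
        augL g h ρ (x t) (x0 (t + 1)) (y t) ≤ augL g h ρ (x t) z (y t)) ∧
      (none ∉ C (t + 1) → x0 (t + 1) = x0 t))
    (hxupd : ∀ (t : ℕ) (k : Fin K),
      (some k ∈ C (t + 1) → ∀ z : EuclideanSpace ℝ (Fin N),
        g k (x (t + 1) k) + ⟪y t k, x (t + 1) k - x0 (t + 1)⟫
            + ρ k / 2 * ‖x (t + 1) k - x0 (t + 1)‖ ^ 2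
          ≤ g k z + ⟪y t k, z - x0 (t + 1)⟫ + ρ k / 2 * ‖z - x0 (t + 1)‖ ^ 2) ∧
      (some k ∉ C (t + 1) → x (t + 1) k = x t k))
    (hyupd : ∀ (t : ℕ) (k : Fin K),
      (some k ∈ C (t + 1) → y (t + 1) k = y t k + ρ k • (x (t + 1) k - x0 (t + 1))) ∧
      (some k ∉ C (t + 1) → y (t + 1) k = y t k))
    -- period-T essentially cyclic rule
    (T : ℕ)
    (hcyc : ∀ (t : ℕ) (j : Option (Fin K)), ∃ i, 1 ≤ i ∧ i ≤ T ∧ j ∈ C (t + i))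
    -- X is compact
    (hXcpt : IsCompact X)
    :
    letI Zstar : Set ((Fin K → EuclideanSpace ℝ (Fin N)) × EuclideanSpace ℝ (Fin N)
        × (Fin K → EuclideanSpace ℝ (Fin N))) :=
      {z | (∀ k : Fin K, g' k (z.1 k) + z.2.2 k = 0) ∧
           (z.2.1 ∈ X ∧ ∀ w ∈ X,
             h z.2.1 + ∑ k, ⟪z.2.2 k, z.1 k - z.2.1⟫
               ≤ h w + ∑ k, ⟪z.2.2 k, z.1 k - w⟫) ∧
           (∀ k : Fin K, z.1 k = z.2.1)}
    Zstar.Nonempty ∧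
    Bornology.IsBounded (Set.range (fun t : ℕ => (x t, x0 t, y t))) ∧
    Tendsto (fun t : ℕ => Metric.infDist (x t, x0 t, y t) Zstar) atTop (nhds 0) := by
  have hA : IsFlexibleADMM g h X ρ x x0 y C :=
    { first_update_all := hC1
      x0_mem := fun t ht => ((hx0upd t).1 ht).1
      x0_isMinOn := fun t ht => isMinOn_iff.2 ((hx0upd t).1 ht).2
      x0_stay := fun t => (hx0upd t).2
      x_isMinOn := fun t k hk => isMinOn_univ_iff.2 ((hxupd t k).1 hk)
      x_stay := fun t k => (hxupd t k).2
      y_update := fun t k => (hyupd t k).1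
      y_stay := fun t k => (hyupd t k).2 }
  have hg' : ∀ k, Continuous (g' k) := fun k =>
    (LipschitzWith.of_dist_le' fun u v => by simpa only [dist_eq_norm] using hLip k u v).continuous
  obtain ⟨hx, hx0⟩ := hA.tendsto_x_x0_succ_sub hK hgrad hLip hρ hstrong hA2b hA2c hconv hXcv hbdd
  have hy := hA.tendsto_y_succ_sub hgrad hLip hx
  have hres := hA.tendsto_x_sub_x0 hρ hcyc hx hx0 hy
  have hbound := isBounded_range_of_tendsto_sub hXcpt hg' hA.x0_succ_mem
    (hA.y_succ_eq_neg_grad hgrad) hres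
  obtain ⟨hne, hdist⟩ := tendsto_infDist_of_forall_mapClusterPt_mem hbound fun a ha =>
    hA.mem_stationarySet_of_mapClusterPt hgrad hg' hconv hXcl hXcv hcyc hx hx0 hy hres ha
  exact ⟨hne, hbound, hdist⟩

/-- **Theorem 2.1, part 3.**  Under the period-`T` essentially cyclic rule, Assumptions
A1–A3, and compactness of `X`, the set `Z*` of stationary tuples is nonempty, the iterates
are bounded, and `dist(({x^t_k}, x_0^t, y^t), Z*) → 0`. -/
theorem theorem2_1_part3
    {N K : ℕ} (hK : 1 ≤ K)
    (g : Fin K → EuclideanSpace ℝ (Fin N) → ℝ)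
    (g' : Fin K → EuclideanSpace ℝ (Fin N) → EuclideanSpace ℝ (Fin N))
    (h : EuclideanSpace ℝ (Fin N) → ℝ)
    (X : Set (EuclideanSpace ℝ (Fin N)))
    (Lg ρ γ : Fin K → ℝ)
    (x : ℕ → Fin K → EuclideanSpace ℝ (Fin N))
    (x0 : ℕ → EuclideanSpace ℝ (Fin N))
    (y : ℕ → Fin K → EuclideanSpace ℝ (Fin N))
    (C : ℕ → Finset (Option (Fin K)))
    -- Assumption A1
    (hgrad : ∀ k z, HasGradientAt (g k) (g' k z) z)
    (hLpos : ∀ k, 0 < Lg k)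
    (hLip : ∀ k u v, ‖g' k u - g' k v‖ ≤ Lg k * ‖u - v‖)
    (hconv : ConvexOn ℝ Set.univ h)
    (hXne : X.Nonempty) (hXcl : IsClosed X) (hXcv : Convex ℝ X)
    (hρ : ∀ k, 0 < ρ k)
    -- Assumption A2
    (hγpos : ∀ k, 0 < γ k)
    (hstrong : ∀ k, StrongConvexOn Set.univ (γ k)
      (fun z : EuclideanSpace ℝ (Fin N) => g k z + ρ k / 2 * ‖z‖ ^ 2))
    (hA2b : ∀ k, 2 * Lg k ^ 2 < ρ k * γ k)
    (hA2c : ∀ k, Lg k ≤ ρ k)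
    -- Assumption A3 : `f` is bounded below over `X`
    (hbdd : BddBelow ((fun z => (∑ k, g k z) + h z) '' X))
    -- Algorithm 2
    (hC1 : C 1 = Finset.univ)
    (hx0upd : ∀ t : ℕ,
      (none ∈ C (t + 1) → x0 (t + 1) ∈ X ∧ ∀ z ∈ X,
        augL g h ρ (x t) (x0 (t + 1)) (y t) ≤ augL g h ρ (x t) z (y t)) ∧
      (none ∉ C (t + 1) → x0 (t + 1) = x0 t))
    (hxupd : ∀ (t : ℕ) (k : Fin K),
      (some k ∈ C (t + 1) → ∀ z : EuclideanSpace ℝ (Fin N),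
        g k (x (t + 1) k) + ⟪y t k, x (t + 1) k - x0 (t + 1)⟫
            + ρ k / 2 * ‖x (t + 1) k - x0 (t + 1)‖ ^ 2
          ≤ g k z + ⟪y t k, z - x0 (t + 1)⟫ + ρ k / 2 * ‖z - x0 (t + 1)‖ ^ 2) ∧
      (some k ∉ C (t + 1) → x (t + 1) k = x t k))
    (hyupd : ∀ (t : ℕ) (k : Fin K),
      (some k ∈ C (t + 1) → y (t + 1) k = y t k + ρ k • (x (t + 1) k - x0 (t + 1))) ∧
      (some k ∉ C (t + 1) → y (t + 1) k = y t k))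
    -- period-T essentially cyclic rule
    (T : ℕ) (hT : 1 ≤ T)
    (hcyc : ∀ (t : ℕ) (j : Option (Fin K)), ∃ i, 1 ≤ i ∧ i ≤ T ∧ j ∈ C (t + i))
    -- X is compact
    (hXcpt : IsCompact X)
    :
    letI Zstar : Set ((Fin K → EuclideanSpace ℝ (Fin N)) × EuclideanSpace ℝ (Fin N)
        × (Fin K → EuclideanSpace ℝ (Fin N))) :=
      {z | (∀ k : Fin K, g' k (z.1 k) + z.2.2 k = 0) ∧
           (z.2.1 ∈ X ∧ ∀ w ∈ X,
             h z.2.1 + ∑ k, ⟪z.2.2 k, z.1 k - z.2.1⟫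
               ≤ h w + ∑ k, ⟪z.2.2 k, z.1 k - w⟫) ∧
           (∀ k : Fin K, z.1 k = z.2.1)}
    Zstar.Nonempty ∧
    Bornology.IsBounded (Set.range (fun t : ℕ => (x t, x0 t, y t))) ∧
    Tendsto (fun t : ℕ => Metric.infDist (x t, x0 t, y t) Zstar) atTop (nhds 0) :=
  theorem2_1_part3_general hK g g' h X Lg ρ γ x x0 y C hgrad hLip hconv hXcl hXcv hρ hstrong hA2b
    hA2c hbdd hC1 hx0upd hxupd hyupd T hcyc hXcpt
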